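/- Fix n items, a number d, and for each item i a multiset of d real utilities u_i^1 ≥ u_i^2 ≥ ... ≥ u_i^d, together with a strict domination relation ≺ on the utilities that linearly refines the numerical order (u_i^t ≺ u_j^r whenever u_i^t < u_j^r, and any two equal utilities of distinct items are comparable under ≺). Then there exists a perfect coupling c (a partition of the n·d utilities into d chains, each chain containing exactly one utility of every item) that simultaneously realizes K_{[i]} for every i ∈ {1,...,n}; that is, for every i, the number of chains of c whose ≺-maximal utility belongs to one of items 1,...,i equals the maximum of this quantity over all perfect couplings. -/

import Mathlib

noncomputable section

/-- A perfect coupling of `n` multisets of `d` utilities each: chain `t ∈ Fin d` consists of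
the utilities `(i, (c i) t)` for `i ∈ Fin n`, i.e. exactly one utility of every item.
(Partitions of the `n·d` utilities into `d` such chains correspond exactly to such families of
bijections.) -/
abbrev Coupling (n d : ℕ) := Fin n → Equiv.Perm (Fin d)

/-- Chain `t` of the coupling `c` is dominated by item `i` (w.r.t. the strict domination
relation `prec` on utilities, a utility being identified by its item and its index):
the utility of every other item in the chain is dominated by the utility of item `i`. -/
def DominatedBy {n d : ℕ} (prec : Fin n × Fin d → Fin n × Fin d → Prop)
    (c : Coupling n d) (i : Fin n) (t : Fin d) : Prop :=
  ∀ j : Fin n, j ≠ i → prec (j, c j t) (i, c i t)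

/-- `k_i(c)`: the number of chains of `c` dominated by item `i`. -/
def kCount {n d : ℕ} (prec : Fin n × Fin d → Fin n × Fin d → Prop)
    (c : Coupling n d) (i : Fin n) : ℕ :=
  Set.ncard {t : Fin d | DominatedBy prec c i t}

/-- `k_{[i]}(c)`: the number of chains of `c` dominated by one of the items `1,…,i`. -/
def kCum {n d : ℕ} (prec : Fin n × Fin d → Fin n × Fin d → Prop)
    (c : Coupling n d) (i : Fin n) : ℕ :=
  Set.ncard {t : Fin d | ∃ j : Fin n, j ≤ i ∧ DominatedBy prec c j t}

/-- `K_{[i]}`: the maximum of `k_{[i]}(c')` over all perfect couplings `c'`. -/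
def Kmax {n d : ℕ} (prec : Fin n × Fin d → Fin n × Fin d → Prop) (i : Fin n) : ℕ :=
  ⨆ c : Coupling n d, kCum prec c i

/-!
Replace `≺` by a linear extension, encoded by an injective rank `ρ`, and take a coupling `c`
maximizing `(k_{[1]}, …, k_{[n]})` lexicographically. It then suffices that whenever some coupling
beats `c` at level `i`, `c` can be improved at level `i` without losing at any level `j ≤ i`.
For this, maximize the potential `∑ₜ (top rank of the items ≤ i in chain t) + k_{[i]}` over the
couplings at least as good as `c` at all levels `≤ i`. If Hall's condition lets the items `> i`
be rearranged so that one more chain is won, do so. Otherwise counting against the better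
coupling yields an entry of an item `≤ i` that is buried in its chain but ranks above the top of
a lost chain; moving it into that chain raises the potential. Neither move loses a chain at any
level `j ≤ i`.
-/

open Finset Function

theorem Pi.toLex_lt_toLex_of_le_of_lt {ι : Type*} {β : ι → Type*} [LinearOrder ι]
    [WellFoundedLT ι] [∀ i, LinearOrder (β i)] {x y : ∀ i, β i} {i : ι}
    (hle : ∀ j ≤ i, x j ≤ y j) (hlt : x i < y i) : toLex x < toLex y := by
  by_contra h
  have hyx : toLex y ≤ toLex x := not_lt.mp h
  have heq : ∀ j ≤ i, x j = y j := by
    intro j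
    induction j using WellFoundedLT.induction with
    | _ j ih =>
      intro hj
      exact le_antisymm (hle j hj)
        (Pi.apply_le_of_toLex hyx fun k hk => (ih k hk (hk.le.trans hj)).symm)
  exact hlt.ne (heq i le_rfl)

theorem exists_injective_rank {α : Type*} [Fintype α] (r : α → α → Prop)
    (hasymm : ∀ a b, r a b → ¬ r b a) (htrans : ∀ a b c, r a b → r b c → r a c) :
    ∃ ρ : α → ℕ, Injective ρ ∧ ∀ a b, r a b → ρ a < ρ b := by
  classical
  set N := Fintype.card α
  let below : α → ℕ := fun a => #{x | r x a}
  let e := Fintype.equivFin α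
  -- rank by the number of `r`-predecessors, breaking ties by the index `e a < N`
  have key : ∀ a b, below a < below b → N * below a + e a < N * below b + e b := by
    intro a b h
    calc N * below a + e a < N * below a + N := by have := (e a).isLt; omega
      _ = N * (below a + 1) := by ring
      _ ≤ N * below b := Nat.mul_le_mul_left _ h
      _ ≤ N * below b + e b := Nat.le_add_right _ _
  refine ⟨fun a => N * below a + e a, fun a b hab => ?_, fun a b hr => key a b ?_⟩
  · have hb : below a = below b := by
      rcases lt_trichotomy (below a) (below b) with h | h | h
      · exact absurd hab (key a b h).ne
      · exact h
      · exact absurd hab (key b a h).ne'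
    simp only [hb, Nat.add_left_cancel_iff, Fin.val_inj] at hab
    exact e.injective hab
  · refine card_lt_card ⟨fun x hx => ?_, fun hsub => ?_⟩
    · simp only [mem_filter, mem_univ, true_and] at hx ⊢
      exact htrans _ _ _ hx hr
    · have : a ∈ ({x | r x a} : Finset α) := hsub (by simpa using hr)
      simp only [mem_filter, mem_univ, true_and] at this
      exact hasymm a a this this

theorem exists_perm_lt_on_of_card_le {α β : Type*} [Fintype α] [DecidableEq α] [LinearOrder β]
    (x m : α → β) (S : Finset α) (hcard : ∀ v, #{t ∈ S | m t ≤ v} ≤ #{s | x s < v}) :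
    ∃ σ : Equiv.Perm α, ∀ t ∈ S, x (σ t) < m t := by
  classical
  have hall : ∀ A : Finset α, #A ≤ #{s | ∃ t ∈ A, t ∈ S → x s < m t} := by
    intro A
    by_cases hA : A ⊆ S
    · rcases A.eq_empty_or_nonempty with rfl | hne
      · simp
      obtain ⟨t₀, ht₀, hmax⟩ := exists_max_image A m hne
      calc #A ≤ #{t ∈ S | m t ≤ m t₀} := card_le_card fun t ht => by
              simpa using ⟨hA ht, hmax t ht⟩
        _ ≤ #{s | x s < m t₀} := hcard _
        _ ≤ _ := card_le_card fun s hs => by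
              simp only [mem_filter, mem_univ, true_and] at hs ⊢
              exact ⟨t₀, ht₀, fun _ => hs⟩
    · obtain ⟨t₀, ht₀, ht₀S⟩ := not_subset.mp hA
      calc #A ≤ #(univ : Finset α) := card_le_univ A
        _ ≤ _ := card_le_card fun s _ => by simpa using ⟨t₀, ht₀, fun h => absurd h ht₀S⟩
  obtain ⟨f, hf, hfx⟩ := (Fintype.all_card_le_filter_rel_iff_exists_injective _).mp hall
  exact ⟨Equiv.ofBijective f hf.bijective_of_finite, fun t ht => hfx t ht⟩

namespace Coupling

open scoped Classical

variable {n d : ℕ} (ρ : Fin n × Fin d → ℕ)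

def prefixMax (c : Coupling n d) (i : Fin n) (t : Fin d) : ℕ :=
  (Iic i).sup fun k => ρ (k, c k t)

def winners (c : Coupling n d) (i : Fin n) : Finset (Fin d) :=
  {t | ∃ k ≤ i, DominatedBy (fun a b => ρ a < ρ b) c k t}

/-- Hall's condition for rearranging the items `> i` so that the items `≤ i` win every chain
of `S`. -/
def HallCondition (c : Coupling n d) (i : Fin n) (S : Finset (Fin d)) : Prop :=
  ∀ g, i < g → ∀ v, #{t ∈ S | prefixMax ρ c i t ≤ v} ≤ #{s | ρ (g, s) < v}

def potential (c : Coupling n d) (i : Fin n) : ℕ :=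
  ∑ t, prefixMax ρ c i t + #(winners ρ c i)

def swapChains (c : Coupling n d) (k : Fin n) (t₁ t₂ : Fin d) : Coupling n d :=
  update c k ((Equiv.swap t₁ t₂).trans (c k))

variable {ρ} {c c' : Coupling n d} {i j k k' : Fin n} {t t₁ t₂ : Fin d}

lemma mem_winners : t ∈ winners ρ c i ↔ ∃ k ≤ i, ∀ k' ≠ k, ρ (k', c k' t) < ρ (k, c k t) := by
  rw [winners, mem_filter]
  simp only [mem_univ, true_and, DominatedBy]

lemma le_prefixMax (hk : k ≤ i) : ρ (k, c k t) ≤ prefixMax ρ c i t :=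
  le_sup (f := fun k => ρ (k, c k t)) (mem_Iic.mpr hk)

lemma exists_eq_prefixMax (ρ : Fin n × Fin d → ℕ) (c : Coupling n d) (i : Fin n) (t : Fin d) :
    ∃ k ≤ i, ρ (k, c k t) = prefixMax ρ c i t := by
  obtain ⟨k, hk, heq⟩ := exists_mem_eq_sup (Iic i) ⟨i, mem_Iic.mpr le_rfl⟩ fun k => ρ (k, c k t)
  exact ⟨k, mem_Iic.mp hk, heq.symm⟩

lemma prefixMax_congr (h : ∀ k ≤ i, c' k t = c k t) : prefixMax ρ c' i t = prefixMax ρ c i t :=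
  sup_congr rfl fun k hk => by rw [h k (mem_Iic.mp hk)]

lemma winners_mono (c : Coupling n d) : Monotone (winners ρ c) := by
  intro j i hji t ht
  obtain ⟨k, hk, hdom⟩ := mem_winners.mp ht
  exact mem_winners.mpr ⟨k, hk.trans hji, hdom⟩

lemma lt_prefixMax_of_mem_winners (ht : t ∈ winners ρ c i) {g : Fin n} (hg : i < g) :
    ρ (g, c g t) < prefixMax ρ c i t := by
  obtain ⟨k, hk, hdom⟩ := mem_winners.mp ht
  exact (hdom g (hk.trans_lt hg).ne').trans_le (le_prefixMax hk)

lemma mem_winners_of_forall_lt (hρ : Injective ρ)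
    (h : ∀ g, i < g → ρ (g, c g t) < prefixMax ρ c i t) : t ∈ winners ρ c i := by
  obtain ⟨k, hk, hkmax⟩ := exists_eq_prefixMax ρ c i t
  refine mem_winners.mpr ⟨k, hk, fun k' hk' => ?_⟩
  rw [hkmax]
  rcases le_or_gt k' i with hk'i | hk'i
  · exact lt_of_le_of_ne (le_prefixMax hk'i)
      fun heq => hk' (congrArg Prod.fst (hρ (heq.trans hkmax.symm)))
  · exact h k' hk'i

lemma kCum_eq_card_winners (prec : Fin n × Fin d → Fin n × Fin d → Prop)
    (hmono : ∀ a b, prec a b → ρ a < ρ b)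
    (htotal : ∀ a b : Fin n × Fin d, a.1 ≠ b.1 → prec a b ∨ prec b a) (c : Coupling n d)
    (i : Fin n) : kCum prec c i = #(winners ρ c i) := by
  have hiff : ∀ a b : Fin n × Fin d, a.1 ≠ b.1 → (prec a b ↔ ρ a < ρ b) := fun a b hab =>
    ⟨hmono a b, fun hlt => (htotal a b hab).resolve_right fun hba => (hmono b a hba).not_gt hlt⟩
  have hset : {t | ∃ j ≤ i, DominatedBy prec c j t} = (winners ρ c i : Set (Fin d)) := by
    ext t
    rw [Set.mem_ofPred_eq, mem_coe, mem_winners]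
    simp only [DominatedBy]
    exact exists_congr fun k => and_congr_right fun _ =>
      forall_congr' fun k' => imp_congr_right fun hk' => hiff (k', c k' t) (k, c k t) hk'
  rw [kCum, hset, Set.ncard_coe_finset]

lemma hallCondition_winners (ρ : Fin n × Fin d → ℕ) (c : Coupling n d) (i : Fin n) :
    HallCondition ρ c i (winners ρ c i) := by
  intro g hg v
  refine card_le_card_of_injOn (fun t => c g t) (fun t ht => ?_) (c g).injective.injOn
  simp only [coe_filter, mem_univ, true_and, Set.mem_ofPred_eq] at ht ⊢
  exact (lt_prefixMax_of_mem_winners ht.1 hg).trans_le ht.2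

lemma exists_eqOn_Iic_subset_winners (hρ : Injective ρ) {S : Finset (Fin d)}
    (hS : HallCondition ρ c i S) :
    ∃ c' : Coupling n d, (∀ k ≤ i, c' k = c k) ∧ S ⊆ winners ρ c' i := by
  have hσ : ∀ g, i < g → ∃ σ : Equiv.Perm (Fin d), ∀ t ∈ S, ρ (g, σ t) < prefixMax ρ c i t :=
    fun g hg => exists_perm_lt_on_of_card_le _ _ S (hS g hg)
  choose! σ hσ using hσ
  refine ⟨fun k => if k ≤ i then c k else σ k, fun k hk => if_pos hk, fun t ht => ?_⟩
  refine mem_winners_of_forall_lt hρ fun g hg => ?_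
  rw [prefixMax_congr (c := c) fun k hk => by simp only [if_pos hk]]
  simpa only [if_neg hg.not_ge] using hσ g hg t ht

lemma mem_winners_of_eqOn_Iic (h : ∀ k ≤ i, c' k = c k) (hji : j ≤ i)
    (ht : t ∈ winners ρ c j) (ht' : t ∈ winners ρ c' i) : t ∈ winners ρ c' j := by
  obtain ⟨k, hkj, hk⟩ := mem_winners.mp ht
  obtain ⟨k', hk'i, hk'⟩ := mem_winners.mp ht'
  obtain rfl : k' = k := by
    by_contra hne
    have h' := hk' k (Ne.symm hne)
    rw [h k (hkj.trans hji), h k' hk'i] at h'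
    exact lt_asymm (hk k' hne) h'
  exact mem_winners.mpr ⟨k', hkj, hk'⟩

lemma exists_potential_lt_of_hallCondition (hρ : Injective ρ) (ht : t ∉ winners ρ c i)
    (hS : HallCondition ρ c i (insert t (winners ρ c i))) :
    ∃ c', (∀ j ≤ i, winners ρ c j ⊆ winners ρ c' j) ∧ potential ρ c i < potential ρ c' i := by
  obtain ⟨c', hc', hsub⟩ := exists_eqOn_Iic_subset_winners hρ hS
  refine ⟨c', fun j hj s hs => mem_winners_of_eqOn_Iic hc' hj hs
    (hsub (mem_insert_of_mem (winners_mono c hj hs))), ?_⟩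
  have hsum : ∑ s, prefixMax ρ c' i s = ∑ s, prefixMax ρ c i s :=
    sum_congr rfl fun s _ => prefixMax_congr fun k hk => by rw [hc' k hk]
  have hcard : #(winners ρ c i) + 1 ≤ #(winners ρ c' i) :=
    (card_insert_of_notMem ht).symm.trans_le (card_le_card hsub)
  rw [potential, potential, hsum]
  omega

lemma swapChains_of_ne (h : k' ≠ k) : swapChains c k t₁ t₂ k' = c k' :=
  update_of_ne h _ _

lemma swapChains_apply_of_ne_of_ne (h₁ : t ≠ t₁) (h₂ : t ≠ t₂) :
    swapChains c k t₁ t₂ k' t = c k' t := by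
  rcases eq_or_ne k' k with rfl | h
  · simp [swapChains, Equiv.swap_apply_of_ne_of_ne h₁ h₂]
  · rw [swapChains_of_ne h]

@[simp] lemma swapChains_self_left : swapChains c k t₁ t₂ k t₁ = c k t₂ := by
  simp [swapChains]

@[simp] lemma swapChains_self_right : swapChains c k t₁ t₂ k t₂ = c k t₁ := by
  simp [swapChains]

/-- Moving a buried entry of a prefix item from chain `t₁` into the lost chain `t₂` keeps every
chain won at every level `j ≤ i`: the winner of `t₁` is not the moved item, and what comes back
into `t₁` lies below `prefixMax t₂`. -/
lemma winners_subset_swapChains (hk : k ≤ i) (hburied : ρ (k, c k t₁) < prefixMax ρ c i t₁)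
    (hraise : prefixMax ρ c i t₂ < ρ (k, c k t₁)) (hlost : t₂ ∉ winners ρ c i) (hj : j ≤ i) :
    winners ρ c j ⊆ winners ρ (swapChains c k t₁ t₂) j := by
  intro t ht
  by_cases h₂ : t = t₂
  · exact absurd (winners_mono c hj (h₂ ▸ ht)) hlost
  by_cases h₁ : t = t₁
  · subst h₁
    obtain ⟨k₀, hk₀, hdom⟩ := mem_winners.mp ht
    have hk₀k : k₀ ≠ k := by
      rintro rfl
      refine hburied.not_ge (Finset.sup_le fun k' _ => ?_)
      rcases eq_or_ne k' k₀ with rfl | hne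
      · exact le_rfl
      · exact (hdom k' hne).le
    refine mem_winners.mpr ⟨k₀, hk₀, fun k' hk' => ?_⟩
    rw [swapChains_of_ne hk₀k]
    rcases eq_or_ne k' k with rfl | hne
    · calc ρ (k', swapChains c k' t t₂ k' t) = ρ (k', c k' t₂) := by rw [swapChains_self_left]
        _ ≤ prefixMax ρ c i t₂ := le_prefixMax hk
        _ < ρ (k', c k' t) := hraise
        _ < ρ (k₀, c k₀ t) := hdom k' hk'
    · rw [swapChains_of_ne hne]
      exact hdom k' hk'
  · have hsame : ∀ k', swapChains c k t₁ t₂ k' t = c k' t := fun k' =>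
      swapChains_apply_of_ne_of_ne h₁ h₂
    simpa only [mem_winners, hsame] using ht

lemma sum_prefixMax_lt_swapChains (hk : k ≤ i) (hburied : ρ (k, c k t₁) < prefixMax ρ c i t₁)
    (hraise : prefixMax ρ c i t₂ < ρ (k, c k t₁)) :
    ∑ t, prefixMax ρ c i t < ∑ t, prefixMax ρ (swapChains c k t₁ t₂) i t := by
  have hlt₂ : prefixMax ρ c i t₂ < prefixMax ρ (swapChains c k t₁ t₂) i t₂ :=
    calc prefixMax ρ c i t₂ < ρ (k, c k t₁) := hraise
      _ = ρ (k, swapChains c k t₁ t₂ k t₂) := by rw [swapChains_self_right]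
      _ ≤ _ := le_prefixMax hk
  refine sum_lt_sum (fun t _ => ?_) ⟨t₂, mem_univ _, hlt₂⟩
  by_cases h₂ : t = t₂
  · exact h₂ ▸ hlt₂.le
  by_cases h₁ : t = t₁
  · subst h₁
    obtain ⟨k₁, hk₁, hmax⟩ := exists_eq_prefixMax ρ c i t
    have hk₁k : k₁ ≠ k := by
      rintro rfl
      exact hburied.ne hmax
    calc prefixMax ρ c i t = ρ (k₁, swapChains c k t t₂ k₁ t) := by
          rw [swapChains_of_ne hk₁k, hmax]
      _ ≤ _ := le_prefixMax hk₁
  · exact (prefixMax_congr fun k' _ => swapChains_apply_of_ne_of_ne h₁ h₂).ge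

lemma exists_potential_lt_of_buried (hk : k ≤ i) (hburied : ρ (k, c k t₁) < prefixMax ρ c i t₁)
    (hraise : prefixMax ρ c i t₂ < ρ (k, c k t₁)) (hlost : t₂ ∉ winners ρ c i) :
    ∃ c', (∀ j ≤ i, winners ρ c j ⊆ winners ρ c' j) ∧ potential ρ c i < potential ρ c' i := by
  refine ⟨swapChains c k t₁ t₂, fun j hj => winners_subset_swapChains hk hburied hraise hlost hj,
    ?_⟩
  have hcard := card_le_card (winners_subset_swapChains hk hburied hraise hlost le_rfl)
  have hsum := sum_prefixMax_lt_swapChains hk hburied hraise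
  rw [potential, potential]
  omega

lemma card_winners_le_card_add_card (ρ : Fin n × Fin d → ℕ) (c : Coupling n d) {g : Fin n}
    (hg : i < g) (v : ℕ) :
    #(winners ρ c i) ≤ #{s | ρ (g, s) < v} + #{e : Fin n × Fin d | e.1 ≤ i ∧ v < ρ e} := by
  rw [← card_filter_add_card_filter_not (fun t => prefixMax ρ c i t ≤ v)]
  refine add_le_add (hallCondition_winners ρ c i g hg v) ?_
  choose κ hκ hκmax using exists_eq_prefixMax ρ c i
  refine card_le_card_of_injOn (fun t => (κ t, c (κ t) t)) (fun t ht => ?_) fun t _ t' _ h => ?_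
  · simp only [coe_filter, mem_univ, true_and, Set.mem_ofPred_eq, not_le] at ht ⊢
    exact ⟨hκ t, hκmax t ▸ ht.2⟩
  · simp only [Prod.mk.injEq] at h
    obtain ⟨hκ', hc⟩ := h
    rw [hκ'] at hc
    exact (c (κ t')).injective hc

lemma exists_buried_of_card_lt (hρ : Injective ρ) {v : ℕ}
    (hcard : #{t | v < prefixMax ρ c i t} < #{e : Fin n × Fin d | e.1 ≤ i ∧ v < ρ e}) :
    ∃ k ≤ i, ∃ t, v < ρ (k, c k t) ∧ ρ (k, c k t) < prefixMax ρ c i t := by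
  let chainOf : Fin n × Fin d → Fin d := fun e => (c e.1).symm e.2
  have hentry : ∀ e, ρ (e.1, c e.1 (chainOf e)) = ρ e := fun e => by simp [chainOf]
  obtain ⟨e, he, e', he', hne, hchain⟩ := exists_ne_map_eq_of_card_lt_of_maps_to hcard
    (f := chainOf) fun e he => by
      simp only [coe_filter, mem_univ, true_and, Set.mem_ofPred_eq] at he ⊢
      exact he.2.trans_le (hentry e ▸ le_prefixMax he.1)
  simp only [mem_filter, mem_univ, true_and] at he he'
  -- of two prefix entries above `v` sharing a chain, the lower one is buried
  have hburied : ∀ e e' : Fin n × Fin d, e'.1 ≤ i → chainOf e = chainOf e' → ρ e < ρ e' →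
      ρ e < prefixMax ρ c i (chainOf e) := fun e e' he' hch hlt =>
    hlt.trans_le (hch ▸ hentry e' ▸ le_prefixMax he')
  rcases (hρ.ne hne).lt_or_gt with hlt | hlt
  · exact ⟨e.1, he.1, chainOf e, (hentry e).symm ▸ he.2,
      (hentry e).symm ▸ hburied e e' he'.1 hchain hlt⟩
  · exact ⟨e'.1, he'.1, chainOf e', (hentry e').symm ▸ he'.2,
      (hentry e').symm ▸ hburied e' e he.1 hchain.symm hlt⟩

lemma exists_tight_threshold {tm : Fin d} (hlost : tm ∉ winners ρ c i)
    (hmax : ∀ t ∉ winners ρ c i, prefixMax ρ c i t ≤ prefixMax ρ c i tm)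
    (hfail : ¬ HallCondition ρ c i (insert tm (winners ρ c i))) :
    ∃ g, i < g ∧ ∃ v, prefixMax ρ c i tm ≤ v ∧
      #{t | v < prefixMax ρ c i t} + #{s | ρ (g, s) < v} ≤ #(winners ρ c i) := by
  simp only [HallCondition, not_forall, not_le] at hfail
  obtain ⟨g, hg, v, hv⟩ := hfail
  have hW := hallCondition_winners ρ c i g hg v
  have htm : prefixMax ρ c i tm ≤ v := by
    by_contra h
    rw [filter_insert, if_neg h] at hv
    omega
  rw [filter_insert, if_pos htm, card_insert_of_notMem (by simp [hlost])] at hv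
  have hhigh : ({t | v < prefixMax ρ c i t} : Finset (Fin d)) ⊆
      {t ∈ winners ρ c i | ¬ prefixMax ρ c i t ≤ v} :=
    fun t ht => by
      simp only [mem_filter, mem_univ, true_and, not_le] at ht ⊢
      exact ⟨by_contra fun h => ((hmax t h).trans htm).not_gt ht, ht⟩
  have hsplit := card_filter_add_card_filter_not (s := winners ρ c i)
    (fun t => prefixMax ρ c i t ≤ v)
  have := card_le_card hhigh
  exact ⟨g, hg, v, htm, by omega⟩

lemma exists_potential_lt_of_not_hallCondition (hρ : Injective ρ)
    (hlt : #(winners ρ c i) < #(winners ρ c' i))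
    (hfail : ∀ t ∉ winners ρ c i, ¬ HallCondition ρ c i (insert t (winners ρ c i))) :
    ∃ c'', (∀ j ≤ i, winners ρ c j ⊆ winners ρ c'' j) ∧ potential ρ c i < potential ρ c'' i := by
  have hne : (univ \ winners ρ c i).Nonempty := sdiff_nonempty.mpr fun h =>
    hlt.not_ge ((card_le_card (subset_univ _)).trans (card_le_card h))
  obtain ⟨tm, htm, hmax⟩ := exists_max_image _ (prefixMax ρ c i) hne
  simp only [mem_sdiff, mem_univ, true_and] at htm hmax
  obtain ⟨g, hg, v, htmv, hcard⟩ := exists_tight_threshold htm hmax (hfail tm htm)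
  have := card_winners_le_card_add_card ρ c' hg v
  obtain ⟨k, hk, t₁, hv, hburied⟩ :=
    exists_buried_of_card_lt hρ (c := c) (i := i) (v := v) (by omega)
  exact exists_potential_lt_of_buried hk hburied (htmv.trans_lt hv) htm

lemma exists_potential_lt (hρ : Injective ρ) (hlt : #(winners ρ c i) < #(winners ρ c' i)) :
    ∃ c'', (∀ j ≤ i, winners ρ c j ⊆ winners ρ c'' j) ∧ potential ρ c i < potential ρ c'' i := by
  by_cases h : ∃ t ∉ winners ρ c i, HallCondition ρ c i (insert t (winners ρ c i))
  · obtain ⟨t, ht, hS⟩ := h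
    exact exists_potential_lt_of_hallCondition hρ ht hS
  · push Not at h
    exact exists_potential_lt_of_not_hallCondition hρ hlt h

theorem exists_card_winners_lt_of_lt (hρ : Injective ρ)
    (hlt : #(winners ρ c i) < #(winners ρ c' i)) :
    ∃ c'', (∀ j ≤ i, #(winners ρ c j) ≤ #(winners ρ c'' j)) ∧
      #(winners ρ c i) < #(winners ρ c'' i) := by
  let good : Finset (Coupling n d) := {c'' | ∀ j ≤ i, #(winners ρ c j) ≤ #(winners ρ c'' j)}
  obtain ⟨cbar, hcbar, hmax⟩ := exists_max_image good (potential ρ · i) ⟨c, by simp [good]⟩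
  simp only [good, mem_filter, mem_univ, true_and] at hcbar hmax
  refine ⟨cbar, hcbar, lt_of_not_ge fun hle => ?_⟩
  obtain ⟨c'', hsub, hpot⟩ := exists_potential_lt hρ (hle.trans_lt hlt)
  exact (hmax c'' fun j hj => (hcbar j hj).trans (card_le_card (hsub j hj))).not_gt hpot

theorem exists_forall_card_winners_le (hρ : Injective ρ) :
    ∃ c : Coupling n d, ∀ i c', #(winners ρ c' i) ≤ #(winners ρ c i) := by
  obtain ⟨c, -, hmax⟩ := exists_max_image univ
    (fun c : Coupling n d => toLex fun i => #(winners ρ c i)) univ_nonempty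
  refine ⟨c, fun i c' => le_of_not_gt fun hlt => ?_⟩
  obtain ⟨c'', hle, hlt'⟩ := exists_card_winners_lt_of_lt hρ hlt
  exact (hmax c'' (mem_univ _)).not_gt (Pi.toLex_lt_toLex_of_le_of_lt hle hlt')

end Coupling

theorem exists_coupling_realizing_all_cumulative_maxima
    (n d : ℕ)
    (prec : Fin n × Fin d → Fin n × Fin d → Prop)
    (hasymm : ∀ a b : Fin n × Fin d, prec a b → ¬ prec b a)
    (htrans : ∀ a b c : Fin n × Fin d, prec a b → prec b c → prec a c)
    (htotal : ∀ a b : Fin n × Fin d, a.1 ≠ b.1 → prec a b ∨ prec b a) :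
    ∃ c : Coupling n d, ∀ i : Fin n, kCum prec c i = Kmax prec i := by
  obtain ⟨ρ, hρ, hmono⟩ := exists_injective_rank prec hasymm htrans
  obtain ⟨c, hc⟩ := Coupling.exists_forall_card_winners_le hρ
  refine ⟨c, fun i => ?_⟩
  rw [Kmax]
  refine le_antisymm (le_ciSup (f := (kCum prec · i)) (Set.finite_range _).bddAbove c)
    (ciSup_le fun c' => ?_)
  simp only [Coupling.kCum_eq_card_winners prec hmono htotal]
  exact hc i c'
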